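/- Let f be an F_q-linearized polynomial over F_{q^n} with adjoint f̂ (with respect to the trace bilinear form). Then f is R-q^t-partially scattered if and only if f̂ is R-q^t-partially scattered. -/

import Mathlib

/-!
Write `f_ρ(x) = f(ρx) - ρ f(x)`. Partial scatteredness of `f` says exactly that `f_ρ` has trivial
kernel for every `ρ` with `ρ^{q^t} = ρ ≠ ρ^q`. For the form `(y, z) ↦ Tr(yz)` the adjoint of `f_ρ`
is `-f̂_ρ`, and since `F` is finite and the form nondegenerate, an additive map is injective iff its
adjoint is. Any Frobenius-invariant nondegenerate trace will do; we take the one down to the prime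
field.
-/

open Finset Function

section Adjoint

variable {R M : Type*} [Ring R] [Finite R] [AddCommGroup M] (T : R →+ M)

theorem injective_of_adjoint (hT : ∀ x ≠ 0, ∃ y, T (x * y) ≠ 0) {g h : R →+ R}
    (hgh : ∀ y z, T (y * g z) = T (z * h y)) (hg : Injective g) : Injective h := by
  refine (injective_iff_map_eq_zero h).2 fun y hy => ?_
  by_contra hy0
  obtain ⟨v, hv⟩ := hT y hy0
  obtain ⟨z, rfl⟩ := Finite.injective_iff_surjective.1 hg v
  exact hv (by rw [hgh, hy, mul_zero, map_zero])

theorem injective_iff_of_adjoint (hT : ∀ x ≠ 0, ∃ y, T (x * y) ≠ 0) {g h : R →+ R}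
    (hgh : ∀ y z, T (y * g z) = T (z * h y)) : Injective g ↔ Injective h :=
  ⟨injective_of_adjoint T hT hgh, injective_of_adjoint T hT fun y z => (hgh z y).symm⟩

end Adjoint

section Commutator

variable {R M : Type*} [CommRing R] [AddCommGroup M]

/-- The paper's `f_ρ`. -/
def commutatorMulLeft (ρ : R) (f : R →+ R) : R →+ R :=
  f.comp (AddMonoidHom.mulLeft ρ) - (AddMonoidHom.mulLeft ρ).comp f

@[simp]
theorem commutatorMulLeft_apply (ρ : R) (f : R →+ R) (x : R) :
    commutatorMulLeft ρ f x = f (ρ * x) - ρ * f x :=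
  rfl

theorem adjoint_commutatorMulLeft (T : R →+ M) {f g : R →+ R}
    (hfg : ∀ y z, T (y * f z) = T (z * g y)) (ρ : R) (y z : R) :
    T (y * commutatorMulLeft ρ f z) = T (z * (-commutatorMulLeft ρ g) y) :=
  calc T (y * commutatorMulLeft ρ f z) = T (y * f (ρ * z)) - T (ρ * y * f z) := by
        rw [commutatorMulLeft_apply, ← map_sub, mul_sub, mul_left_comm, mul_assoc]
    _ = T (ρ * z * g y) - T (z * g (ρ * y)) := by rw [hfg, hfg]
    _ = T (z * (-commutatorMulLeft ρ g) y) := by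
        rw [← map_sub, AddMonoidHom.neg_apply, commutatorMulLeft_apply]
        ring_nf

end Commutator

section Scattered

variable {F : Type*} [Field F]

def IsRPartiallyScattered (q t : ℕ) (f : F → F) : Prop :=
  ∀ y z : F, y ≠ 0 → z ≠ 0 → f y / y = f z / z → (y / z) ^ q ^ t = y / z → (y / z) ^ q = y / z

theorem isRPartiallyScattered_iff_forall_injective {q : ℕ} (hq : q ≠ 0) (t : ℕ) (f : F →+ F) :
    IsRPartiallyScattered q t f ↔
      ∀ ρ : F, ρ ^ q ^ t = ρ → ρ ^ q ≠ ρ → Injective (commutatorMulLeft ρ f) := by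
  simp only [injective_iff_map_eq_zero, commutatorMulLeft_apply, sub_eq_zero]
  constructor
  · intro H ρ hρt hρq x hx
    by_contra hx0
    have hρ0 : ρ ≠ 0 := by rintro rfl; exact hρq (zero_pow hq)
    have hratio : ρ * x / x = ρ := mul_div_cancel_right₀ ρ hx0
    have hfx : f (ρ * x) / (ρ * x) = f x / x := by rw [hx, mul_div_mul_left _ _ hρ0]
    have := H (ρ * x) x (mul_ne_zero hρ0 hx0) hx0 hfx (by rwa [hratio])
    exact hρq (by rwa [hratio] at this)
  · intro H y z hy hz hyz hρt
    by_contra hρq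
    refine hz (H (y / z) hρt hρq z ?_)
    rw [div_mul_cancel₀ y hz]
    rw [div_eq_div_iff hy hz] at hyz
    field_simp
    linear_combination hyz

end Scattered

section Trace

variable {F : Type*} [Field F] [Finite F] {p : ℕ} [Fact p.Prime] [Algebra (ZMod p) F]

theorem trace_pow_prime_pow (m : ℕ) (x : F) :
    Algebra.trace (ZMod p) F (x ^ p ^ m) = Algebra.trace (ZMod p) F x := by
  have hfrob := congrFun (FiniteField.coe_frobeniusAlgEquivOfAlgebraic_iterate (ZMod p) F m) x
  rw [ZMod.card] at hfrob
  rw [← hfrob, ← AlgEquiv.coe_pow, Algebra.trace_eq_of_algEquiv]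

theorem exists_trace_mul_ne_zero {x : F} (hx : x ≠ 0) :
    ∃ y, Algebra.trace (ZMod p) F (x * y) ≠ 0 := by
  by_contra! h
  exact hx ((traceForm_nondegenerate (ZMod p) F).1 x h)

end Trace

section Linearized

variable {F : Type*} [Field F] (p k : ℕ) [ExpChar F p]

def linearized {ι : Type*} [Fintype ι] (c : ι → F) (e : ι → ℕ) : F →+ F where
  toFun x := ∑ i, c i * x ^ (p ^ k) ^ e i
  map_zero' := by simp [(expChar_pos F p).ne']
  map_add' x y := by simp only [← pow_mul, add_pow_expChar_pow, mul_add, sum_add_distrib]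

theorem trace_mul_linearized_eq_trace_mul_adjoint [Fintype F] [Fact p.Prime]
    [Algebra (ZMod p) F] {n : ℕ} (hF : Fintype.card F = (p ^ k) ^ n) (a : Fin n → F) (y z : F) :
    Algebra.trace (ZMod p) F (y * linearized p k a (↑) z) =
      Algebra.trace (ZMod p) F
        (z * linearized p k (fun i => a i ^ (p ^ k) ^ (n - i)) (fun i => n - i) y) := by
  simp only [linearized, AddMonoidHom.coe_mk, ZeroHom.coe_mk, mul_sum, map_sum]
  refine sum_congr rfl fun i _ => ?_
  have hz : (z ^ (p ^ k) ^ (i : ℕ)) ^ (p ^ k) ^ (n - i) = z := by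
    rw [← pow_mul, ← pow_add, Nat.add_sub_cancel' i.isLt.le, ← hF, FiniteField.pow_card]
  rw [← trace_pow_prime_pow (k * (n - i)), pow_mul, mul_pow, mul_pow, hz]
  ring_nf

end Linearized

theorem adjoint_R_partially_scattered_iff_general (q n t : ℕ) (hq : IsPrimePow q)
    (F : Type) [Field F] [Fintype F] (hF : Fintype.card F = q ^ n) (a : Fin n → F) :
    (∀ y z : F, y ≠ 0 → z ≠ 0 →
        (∑ i : Fin n, a i * y ^ q ^ (i : ℕ)) / y = (∑ i : Fin n, a i * z ^ q ^ (i : ℕ)) / z →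
        (y / z) ^ q ^ t = y / z → (y / z) ^ q = y / z) ↔
      (∀ y z : F, y ≠ 0 → z ≠ 0 →
        (∑ i : Fin n, (a i) ^ q ^ (n - (i : ℕ)) * y ^ q ^ (n - (i : ℕ))) / y =
          (∑ i : Fin n, (a i) ^ q ^ (n - (i : ℕ)) * z ^ q ^ (n - (i : ℕ))) / z →
        (y / z) ^ q ^ t = y / z → (y / z) ^ q = y / z) := by
  obtain ⟨p, k, hp, -, rfl⟩ := hq
  have := Fact.mk (Nat.prime_iff.2 hp)
  have : CharP F p := charP_of_card_eq_prime_pow (hF.trans (pow_mul p k n).symm)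
  let := ZMod.algebra F p
  have hq : p ^ k ≠ 0 := pow_ne_zero k hp.ne_zero
  change IsRPartiallyScattered (p ^ k) t (linearized p k a (↑)) ↔
    IsRPartiallyScattered (p ^ k) t
      (linearized p k (fun i => a i ^ (p ^ k) ^ (n - i)) (fun i => n - i))
  rw [isRPartiallyScattered_iff_forall_injective hq, isRPartiallyScattered_iff_forall_injective hq]
  have hadj := trace_mul_linearized_eq_trace_mul_adjoint p k hF a
  refine forall₃_congr fun ρ _ _ => ?_
  exact (injective_iff_of_adjoint (Algebra.trace (ZMod p) F).toAddMonoidHom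
    (fun _ => exists_trace_mul_ne_zero)
    (adjoint_commutatorMulLeft _ hadj ρ)).trans
    (neg_injective.of_comp_iff _)

/-- `f(x) = ∑ a_i x^{q^i}` is R-`q^t`-partially scattered iff its adjoint
`f̂(x) = ∑ a_i^{q^{n-i}} x^{q^{n-i}}` is R-`q^t`-partially scattered. -/
theorem adjoint_R_partially_scattered_iff (q n t : ℕ) (hq : IsPrimePow q) (hn : 0 < n)
    (ht : t ∣ n)
    (F : Type) [Field F] [Fintype F] (hF : Fintype.card F = q ^ n) (a : Fin n → F) :
    (∀ y z : F, y ≠ 0 → z ≠ 0 →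
        (∑ i : Fin n, a i * y ^ q ^ (i : ℕ)) / y = (∑ i : Fin n, a i * z ^ q ^ (i : ℕ)) / z →
        (y / z) ^ q ^ t = y / z → (y / z) ^ q = y / z) ↔
      (∀ y z : F, y ≠ 0 → z ≠ 0 →
        (∑ i : Fin n, (a i) ^ q ^ (n - (i : ℕ)) * y ^ q ^ (n - (i : ℕ))) / y =
          (∑ i : Fin n, (a i) ^ q ^ (n - (i : ℕ)) * z ^ q ^ (n - (i : ℕ))) / z →
        (y / z) ^ q ^ t = y / z → (y / z) ^ q = y / z) :=
  adjoint_R_partially_scattered_iff_general q n t hq F hF a
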